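/- Symmetrization/contraction bound for the expected supremum: Let X_T = sup_{Δ ∈ 𝒟_δ(2k,2a,2T)} ‖𝒳(Δ)‖₂. Then (E X_T)² ≤ 16·a·√(2k)·T·E‖Σ_R‖ + p·δ², where Σ_R = Σ_{(i,j)} B_ij ε′_ij e_i(m1)e_j(m2)^T with ε′_ij an i.i.d. Rademacher sequence independent of the B_ij, and ‖Σ_R‖ is its operator norm. -/

import Mathlib

open MeasureTheory ProbabilityTheory

/-- Squared Frobenius norm of a real matrix. -/
noncomputable def frob2 {m1 m2 : ℕ} (A : Matrix (Fin m1) (Fin m2) ℝ) : ℝ :=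
  ∑ i, ∑ j, (A i j) ^ 2

/-- Frobenius norm of a real matrix. -/
noncomputable def frob {m1 m2 : ℕ} (A : Matrix (Fin m1) (Fin m2) ℝ) : ℝ :=
  Real.sqrt (frob2 A)

/-- Nuclear (trace) norm of a real matrix: sum of its singular values. -/
noncomputable def nucNorm {m1 m2 : ℕ} (A : Matrix (Fin m1) (Fin m2) ℝ) : ℝ :=
  ∑ i, Real.sqrt ((show (A.transpose * A).IsHermitian by
    simpa [Matrix.conjTranspose_eq_transpose_of_trivial] using
      Matrix.isHermitian_conjTranspose_mul_self A).eigenvalues i)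

/-- Operator (spectral) norm of a real matrix. -/
noncomputable def opNorm {m1 m2 : ℕ} (A : Matrix (Fin m1) (Fin m2) ℝ) : ℝ :=
  ⨆ v : {v : Fin m2 → ℝ // ∑ j, (v j) ^ 2 ≤ 1}, Real.sqrt (∑ i, (A.mulVec v.1 i) ^ 2)

/-- Matrix scalar product ⟨A,B⟩ = tr(AᵀB). -/
noncomputable def mdot {m1 m2 : ℕ} (A B : Matrix (Fin m1) (Fin m2) ℝ) : ℝ :=
  ∑ i, ∑ j, A i j * B i j

/-- Entrywise multiplication by a realized sampling pattern `B0`; this models the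
observation operator 𝒳 for one realization of the Bernoulli masks. -/
noncomputable def hadB {m1 m2 : ℕ} (B0 A : Matrix (Fin m1) (Fin m2) ℝ) :
    Matrix (Fin m1) (Fin m2) ℝ :=
  Matrix.of fun i j => B0 i j * A i j

/-- The entries of `B` are i.i.d. Bernoulli(p) random variables (taking values 0/1). -/
def IsBernoulliMatrix {m1 m2 : ℕ} {Ω : Type} [MeasurableSpace Ω] (P : Measure Ω)
    (B : Ω → Matrix (Fin m1) (Fin m2) ℝ) (p : ℝ) : Prop :=
  (∀ i j, Measurable fun ω => B ω i j) ∧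
  (∀ ω i j, B ω i j = 0 ∨ B ω i j = 1) ∧
  (∀ i j, P {ω | B ω i j = 1} = ENNReal.ofReal p) ∧
  iIndepFun (fun q : Fin m1 × Fin m2 => fun ω => B ω q.1 q.2) P

/-- The noise entries are measurable, centered, with variance σ², and bounded by U a.s. -/
def IsBoundedNoise {m1 m2 : ℕ} {Ω : Type} [MeasurableSpace Ω] (P : Measure Ω)
    (E : Ω → Matrix (Fin m1) (Fin m2) ℝ) (σ U : ℝ) : Prop :=
  (∀ i j, Measurable fun ω => E ω i j) ∧
  (∀ i j, ∫ ω, E ω i j ∂P = 0) ∧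
  (∀ i j, ∫ ω, (E ω i j) ^ 2 ∂P = σ ^ 2) ∧
  (∀ i j, ∀ᵐ ω ∂P, |E ω i j| ≤ U)

/-- The entries of `e` are Rademacher (±1, fair) random variables. -/
def IsRademacherMatrix {m1 m2 : ℕ} {Ω : Type} [MeasurableSpace Ω] (P : Measure Ω)
    (e : Ω → Matrix (Fin m1) (Fin m2) ℝ) : Prop :=
  (∀ i j, Measurable fun ω => e ω i j) ∧
  (∀ ω i j, e ω i j = 1 ∨ e ω i j = -1) ∧
  (∀ i j, P {ω | e ω i j = 1} = 1 / 2)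

/-- The entries of `B` and `E` together form an independent family. -/
def JointlyIndep {m1 m2 : ℕ} {Ω : Type} [MeasurableSpace Ω] (P : Measure Ω)
    (B E : Ω → Matrix (Fin m1) (Fin m2) ℝ) : Prop :=
  iIndepFun
    (Sum.elim (fun q : Fin m1 × Fin m2 => fun ω => B ω q.1 q.2)
              (fun q : Fin m1 × Fin m2 => fun ω => E ω q.1 q.2)) P

/-- The class 𝒞(k,a): rank ≤ k, sup-norm ≤ a, and ‖M0−A‖₂² ≥ 256(a∨U)²zd/p. -/
def classC {m1 m2 : ℕ} (M0 : Matrix (Fin m1) (Fin m2) ℝ) (a U z p : ℝ) (k : ℕ) :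
    Set (Matrix (Fin m1) (Fin m2) ℝ) :=
  {A | (∀ i j, |A i j| ≤ a) ∧ 256 * (max a U) ^ 2 * z * (m1 + m2) / p ≤ frob2 (M0 - A) ∧
    A.rank ≤ k}

/-- 𝒞 = ∪_{k=1}^m 𝒞(k,a). -/
def classCfull {m1 m2 : ℕ} (M0 : Matrix (Fin m1) (Fin m2) ℝ) (a U z p : ℝ) :
    Set (Matrix (Fin m1) (Fin m2) ℝ) :=
  ⋃ k ∈ Finset.Icc 1 (min m1 m2), classC M0 a U z p k

/-- 𝒞(k,a,T) = {A ∈ 𝒞(k,a) : ‖M0−A‖₂ ≤ T}. -/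
def classCT {m1 m2 : ℕ} (M0 : Matrix (Fin m1) (Fin m2) ℝ) (a U z p : ℝ) (k : ℕ) (T : ℝ) :
    Set (Matrix (Fin m1) (Fin m2) ℝ) :=
  {A | A ∈ classC M0 a U z p k ∧ frob (M0 - A) ≤ T}

/-- 𝒟_δ(k,a,T) = {A : ‖A‖_∞ ≤ a, ‖A‖₂ ≤ δ, ‖A‖_* ≤ √k·T}. -/
def classD {m1 m2 : ℕ} (k : ℕ) (a δ T : ℝ) : Set (Matrix (Fin m1) (Fin m2) ℝ) :=
  {A | (∀ i j, |A i j| ≤ a) ∧ frob A ≤ δ ∧ nucNorm A ≤ Real.sqrt k * T}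


/-!
Every expectation is a finite average over the Bernoulli(`p`) mask patterns `β` and the uniform
sign patterns `ε`. By Jensen, `(𝔼 sup_Δ ‖𝒳(Δ)‖₂)² ≤ 𝔼 sup_Δ Σ β_q Δ_q²`, which is at most
`p δ² + 𝔼 sup_Δ Σ (β_q - p) Δ_q²`.
Symmetrization with an independent copy of `β` bounds the last term by `2 𝔼 sup_Δ Σ ε_q β_q Δ_q²`,
and the contraction principle for `s ↦ s²`, which is `4a`-Lipschitz on `[-2a, 2a]`, by
`8a 𝔼 sup_Δ Σ ε_q β_q Δ_q = 8a 𝔼 sup_Δ ⟨Σ_R, Δ⟩`. Trace duality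
`⟨Σ_R, Δ⟩ ≤ ‖Σ_R‖ ‖Δ‖_* ≤ ‖Σ_R‖ √(2k) 2T` concludes.
-/

open Finset

section BernoulliMean

variable {ι : Type*} [Fintype ι]

def maskVal (b : Bool) : ℝ := if b then 1 else 0

def signVal (b : Bool) : ℝ := if b then 1 else -1

lemma maskVal_nonneg (b : Bool) : 0 ≤ maskVal b := by cases b <;> norm_num [maskVal]

lemma maskVal_le_one (b : Bool) : maskVal b ≤ 1 := by cases b <;> norm_num [maskVal]

lemma abs_maskVal_le_one (b : Bool) : |maskVal b| ≤ 1 := by cases b <;> norm_num [maskVal]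

lemma abs_signVal (b : Bool) : |signVal b| = 1 := by cases b <;> norm_num [signVal]

lemma signVal_not (b : Bool) : signVal (!b) = -signVal b := by cases b <;> norm_num [signVal]

def bernoulliWeight (p : ℝ) (β : ι → Bool) : ℝ := ∏ q, if β q then p else 1 - p

variable {p : ℝ}

lemma bernoulliWeight_nonneg (hp0 : 0 ≤ p) (hp1 : p ≤ 1) (β : ι → Bool) :
    0 ≤ bernoulliWeight p β :=
  prod_nonneg fun q _ => by split <;> linarith

lemma bernoulliWeight_half (β : ι → Bool) :
    bernoulliWeight (1 / 2) β = (1 / 2) ^ Fintype.card ι := by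
  simp only [bernoulliWeight, show (1 : ℝ) - 1 / 2 = 1 / 2 by norm_num, ite_self,
    prod_const, card_univ]

variable [DecidableEq ι]

lemma sum_prod_apply_bool (f : ι → Bool → ℝ) :
    ∑ β : ι → Bool, ∏ q, f q (β q) = ∏ q, (f q true + f q false) := by
  simp only [(Fintype.prod_sum f).symm, Fintype.sum_bool]

lemma sum_bernoulliWeight (p : ℝ) : ∑ β : ι → Bool, bernoulliWeight p β = 1 :=
  (sum_prod_apply_bool fun _ b => if b then p else 1 - p).trans (by simp)

/-- The expectation of `f β` for i.i.d. Bernoulli(`p`) bits `β q`; at `p = 1 / 2`, composed with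
`signVal`, it is the average over Rademacher signs. -/
def bernoulliMean (p : ℝ) (f : (ι → Bool) → ℝ) : ℝ := ∑ β, bernoulliWeight p β * f β

lemma bernoulliMean_const (p c : ℝ) : bernoulliMean p (fun _ : ι → Bool => c) = c := by
  rw [bernoulliMean, ← sum_mul, sum_bernoulliWeight, one_mul]

lemma bernoulliMean_add (f g : (ι → Bool) → ℝ) :
    bernoulliMean p (fun β => f β + g β) = bernoulliMean p f + bernoulliMean p g := by
  simp only [bernoulliMean, mul_add, sum_add_distrib]

lemma bernoulliMean_const_mul (c : ℝ) (f : (ι → Bool) → ℝ) :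
    bernoulliMean p (fun β => c * f β) = c * bernoulliMean p f := by
  simp only [bernoulliMean, mul_sum, mul_left_comm]

lemma bernoulliMean_mono (hp0 : 0 ≤ p) (hp1 : p ≤ 1) {f g : (ι → Bool) → ℝ}
    (h : ∀ β, f β ≤ g β) : bernoulliMean p f ≤ bernoulliMean p g :=
  sum_le_sum fun β _ => mul_le_mul_of_nonneg_left (h β) (bernoulliWeight_nonneg hp0 hp1 β)

lemma bernoulliMean_maskVal (p : ℝ) (q : ι) :
    bernoulliMean p (fun β => maskVal (β q)) = p := by
  have factor : ∀ β : ι → Bool, bernoulliWeight p β * maskVal (β q) =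
      ∏ r, (if β r then p else 1 - p) * (if r = q then maskVal (β r) else 1) := by
    intro β
    rw [prod_mul_distrib, prod_ite_eq' univ q, if_pos (mem_univ q), bernoulliWeight]
  simp only [bernoulliMean, factor]
  rw [sum_prod_apply_bool fun r b => (if b then p else 1 - p) * (if r = q then maskVal b else 1),
    prod_eq_single q (fun r _ hr => by simp [hr]) (by simp)]
  simp [maskVal]

lemma bernoulliMean_half_comp_equiv (e : (ι → Bool) ≃ (ι → Bool)) (f : (ι → Bool) → ℝ) :
    bernoulliMean (1 / 2) (f ∘ e) = bernoulliMean (1 / 2) f := by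
  simp only [bernoulliMean, bernoulliWeight_half, ← mul_sum]
  exact congrArg _ (e.sum_comp f)

lemma bernoulliMean_comm {p' : ℝ} (F : (ι → Bool) → (ι → Bool) → ℝ) :
    bernoulliMean p (fun β => bernoulliMean p' (F β)) =
      bernoulliMean p' (fun τ => bernoulliMean p (fun β => F β τ)) := by
  simp only [bernoulliMean, mul_sum]
  rw [sum_comm]
  exact sum_congr rfl fun _ _ => sum_congr rfl fun _ _ => by ring

/-- Exchanging `β q` and `β' q` at the coordinates selected by `τ` preserves the law of
`(β, β')`. -/
lemma bernoulliMean_swap (τ : ι → Bool) (F : (ι → Bool) → (ι → Bool) → ℝ) :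
    bernoulliMean p (fun β => bernoulliMean p (fun β' =>
      F (fun q => if τ q then β q else β' q) (fun q => if τ q then β' q else β q))) =
    bernoulliMean p (fun β => bernoulliMean p (F β)) := by
  let swap : ((ι → Bool) × (ι → Bool)) ≃ ((ι → Bool) × (ι → Bool)) :=
    Function.Involutive.toPerm
      (fun s => (fun q => if τ q then s.1 q else s.2 q, fun q => if τ q then s.2 q else s.1 q))
      (fun s => by ext q <;> simp only <;> cases τ q <;> rfl)
  have hweight : ∀ s, bernoulliWeight p (swap s).1 * bernoulliWeight p (swap s).2 =
      bernoulliWeight p s.1 * bernoulliWeight p s.2 := by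
    intro s
    simp only [bernoulliWeight, ← prod_mul_distrib]
    refine prod_congr rfl fun q _ => ?_
    change (if (if τ q then s.1 q else s.2 q) then p else 1 - p) *
      (if (if τ q then s.2 q else s.1 q) then p else 1 - p) = _
    cases τ q
    · exact mul_comm _ _
    · rfl
  simp only [bernoulliMean, mul_sum, ← Fintype.sum_prod_type']
  rw [← swap.sum_comp fun s => bernoulliWeight p s.1 * (bernoulliWeight p s.2 * F s.1 s.2)]
  refine sum_congr rfl fun s _ => ?_
  rw [← mul_assoc, ← mul_assoc, hweight]
  rfl

end BernoulliMean

section Contraction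

variable {T : Type*} {ι : Type*}

lemma bddAbove_range_of_le {F : T → ℝ} {C : ℝ} (h : ∀ t, F t ≤ C) :
    BddAbove (Set.range F) :=
  ⟨C, Set.forall_mem_range.2 h⟩

lemma abs_sum_mul_le {c w : ι → ℝ} {C : ℝ} (hc : ∀ q, |c q| ≤ 1) (hw : ∀ q, |w q| ≤ C)
    (s : Finset ι) : |∑ q ∈ s, c q * w q| ≤ s.card * C := by
  calc |∑ q ∈ s, c q * w q| ≤ ∑ q ∈ s, |c q * w q| := abs_sum_le_sum_abs _ _
    _ ≤ ∑ _q ∈ s, C := sum_le_sum fun q _ => by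
        rw [abs_mul]
        exact (mul_le_mul (hc q) (hw q) (abs_nonneg _) zero_le_one).trans_eq (one_mul C)
    _ = s.card * C := by rw [sum_const, nsmul_eq_mul]

lemma bddAbove_range_sum_mul [Fintype ι] {y : ι → T → ℝ} {C : ℝ} (hy : ∀ q t, |y q t| ≤ C)
    {c : ι → ℝ} (hc : ∀ q, |c q| ≤ 1) : BddAbove (Set.range fun t => ∑ q, c q * y q t) :=
  bddAbove_range_of_le fun t => (le_abs_self _).trans (abs_sum_mul_le hc (fun q => hy q t) univ)

lemma bddAbove_range_sum_signVal_mul_maskVal_mul [Fintype ι] {y : ι → T → ℝ} {C : ℝ}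
    (hy : ∀ q t, |y q t| ≤ C) (β τ : ι → Bool) :
    BddAbove (Set.range fun t => ∑ q, signVal (τ q) * (maskVal (β q) * y q t)) := by
  simpa only [mul_assoc] using bddAbove_range_sum_mul hy
    (c := fun q => signVal (τ q) * maskVal (β q)) fun q => by
      rw [abs_mul, abs_signVal, one_mul]; exact abs_maskVal_le_one _

variable [Nonempty T]

/-- The two-point case of the contraction principle: `(⨆ A + v) + (⨆ A - v)` is the supremum
of `A t + A s + (v t - v s)`, and `v t - v s ≤ |u t - u s|` is attained by `±u` at `(t, s)` or
`(s, t)`. -/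
lemma iSup_add_add_iSup_sub_le {A u v : T → ℝ}
    (hu₁ : BddAbove (Set.range fun t => A t + u t))
    (hu₂ : BddAbove (Set.range fun t => A t - u t))
    (h : ∀ t s, |v t - v s| ≤ |u t - u s|) :
    (⨆ t, A t + v t) + (⨆ t, A t - v t) ≤ (⨆ t, A t + u t) + (⨆ t, A t - u t) := by
  refine ciSup_add_ciSup_le fun t s => ?_
  have hts := add_le_add (le_ciSup hu₁ t) (le_ciSup hu₂ s)
  have hst := add_le_add (le_ciSup hu₁ s) (le_ciSup hu₂ t)
  have hvu := (le_abs_self (v t - v s)).trans (h t s)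
  rcases abs_cases (u t - u s) with ⟨habs, _⟩ | ⟨habs, _⟩ <;> linarith

lemma sum_le_sum_of_add_comp_equiv_le {α : Type*} [Fintype α] (e : α ≃ α) {F G : α → ℝ}
    (h : ∀ a, F a + F (e a) ≤ G a + G (e a)) : ∑ a, F a ≤ ∑ a, G a := by
  have hsum := sum_le_sum fun a (_ : a ∈ univ) => h a
  rw [sum_add_distrib, sum_add_distrib, e.sum_comp F, e.sum_comp G] at hsum
  linarith

variable [Fintype ι] [DecidableEq ι]

lemma sum_iSup_signVal_update_le {w : ι → T → ℝ} {f g : T → ℝ} {C : ℝ}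
    (hw : ∀ q t, |w q t| ≤ C) (hf : ∀ t, |f t| ≤ C) (h : ∀ t s, |g t - g s| ≤ |f t - f s|)
    (j : ι) :
    ∑ τ : ι → Bool, ⨆ t, ∑ q, signVal (τ q) * Function.update w j g q t ≤
      ∑ τ : ι → Bool, ⨆ t, ∑ q, signVal (τ q) * Function.update w j f q t := by
  let flip : (ι → Bool) ≃ (ι → Bool) :=
    Function.Involutive.toPerm (fun τ => Function.update τ j (!τ j)) fun τ => by
      ext q; by_cases hq : q = j <;> simp [hq]
  let A : (ι → Bool) → T → ℝ := fun τ t => ∑ q ∈ univ.erase j, signVal (τ q) * w q t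
  have hsplit : ∀ φ τ t, ∑ q, signVal (τ q) * Function.update w j φ q t =
      A τ t + signVal (τ j) * φ t := fun φ τ t => by
    rw [← add_sum_erase univ _ (mem_univ j), add_comm, Function.update_self]
    exact congrArg₂ _ (sum_congr rfl fun q hq => by
      rw [Function.update_of_ne (ne_of_mem_erase hq)]) rfl
  have hA_flip : ∀ τ, A (flip τ) = A τ := fun τ => funext fun t =>
    sum_congr rfl fun q hq => by
      change signVal (Function.update τ j (!τ j) q) * w q t = _
      rw [Function.update_of_ne (ne_of_mem_erase hq)]
  have hsign_flip : ∀ τ, signVal (flip τ j) = -signVal (τ j) := fun τ => by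
    change signVal (Function.update τ j (!τ j) j) = _
    rw [Function.update_self, signVal_not]
  -- Pairing `τ` with its flip at `j` reduces to the two-point case, with `A` the other coordinates.
  refine sum_le_sum_of_add_comp_equiv_le flip fun τ => ?_
  simp only [hsplit, hA_flip, hsign_flip, neg_mul, ← sub_eq_add_neg]
  have hbound : ∀ t, |A τ t| + |signVal (τ j) * f t| ≤ (univ.erase j).card * C + C :=
    fun t => add_le_add (abs_sum_mul_le (fun q => (abs_signVal (τ q)).le) (fun q => hw q t) _)
      (by rw [abs_mul, abs_signVal, one_mul]; exact hf t)
  refine iSup_add_add_iSup_sub_le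
    (bddAbove_range_of_le fun t => (le_abs_self _).trans ((abs_add_le _ _).trans (hbound t)))
    (bddAbove_range_of_le fun t => (le_abs_self _).trans ((abs_sub _ _).trans (hbound t)))
    fun t s => ?_
  rw [← mul_sub, ← mul_sub, abs_mul, abs_mul, abs_signVal, one_mul, one_mul]
  exact h t s

/-- The Ledoux–Talagrand contraction principle, summed over all sign patterns. -/
theorem sum_iSup_signVal_le_of_lipschitz {u v : ι → T → ℝ} {Cu Cv : ℝ}
    (hu : ∀ q t, |u q t| ≤ Cu) (hv : ∀ q t, |v q t| ≤ Cv)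
    (h : ∀ q t s, |v q t - v q s| ≤ |u q t - u q s|) :
    ∑ τ : ι → Bool, ⨆ t, ∑ q, signVal (τ q) * v q t ≤
      ∑ τ : ι → Bool, ⨆ t, ∑ q, signVal (τ q) * u q t := by
  let w : Finset ι → ι → T → ℝ := fun K q => if q ∈ K then u q else v q
  have hw : ∀ K q t, |w K q t| ≤ max Cu Cv := fun K q t => by
    by_cases hq : q ∈ K
    · simpa [w, hq] using le_max_of_le_left (hu q t)
    · simpa [w, hq] using le_max_of_le_right (hv q t)
  suffices ∀ K, ∑ τ : ι → Bool, ⨆ t, ∑ q, signVal (τ q) * v q t ≤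
      ∑ τ : ι → Bool, ⨆ t, ∑ q, signVal (τ q) * w K q t by
    simpa [w] using this univ
  intro K
  induction K using Finset.induction_on with
  | empty => simp [w]
  | insert j K hj ih =>
    have hv_update : Function.update (w K) j (v j) = w K := by
      ext q : 1; by_cases hq : q = j <;> simp [w, hq, hj]
    have hu_update : Function.update (w K) j (u j) = w (insert j K) := by
      ext q : 1; by_cases hq : q = j <;> simp [w, hq]
    refine ih.trans ?_
    rw [← hv_update, ← hu_update]
    exact sum_iSup_signVal_update_le (hw K) (fun t => le_max_of_le_left (hu j t)) (h j) j

end Contraction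

section Symmetrization

variable {ι : Type*} [Fintype ι] [DecidableEq ι] {p : ℝ}

lemma bernoulliMean_half_eq (f : (ι → Bool) → ℝ) :
    bernoulliMean (1 / 2) f = (1 / 2) ^ Fintype.card ι * ∑ τ, f τ := by
  simp only [bernoulliMean, bernoulliWeight_half, mul_sum]

lemma bernoulliMean_sum_maskVal_mul (p : ℝ) (c : ι → ℝ) :
    bernoulliMean p (fun β => ∑ q, maskVal (β q) * c q) = p * ∑ q, c q := by
  simp only [bernoulliMean, mul_sum]
  rw [sum_comm]
  refine sum_congr rfl fun q _ => ?_
  simp only [← mul_assoc, ← sum_mul]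
  exact congrArg (· * c q) (bernoulliMean_maskVal p q)

lemma sq_bernoulliMean_le (hp0 : 0 ≤ p) (hp1 : p ≤ 1) (f : (ι → Bool) → ℝ) :
    bernoulliMean p f ^ 2 ≤ bernoulliMean p (fun β => f β ^ 2) :=
  (Even.convexOn_pow even_two).map_sum_le (fun β _ => bernoulliWeight_nonneg hp0 hp1 β)
    (sum_bernoulliWeight p) (fun _ _ => Set.mem_univ _)

variable {T : Type*} [Nonempty T]

lemma iSup_bernoulliMean_le (hp0 : 0 ≤ p) (hp1 : p ≤ 1) {F : (ι → Bool) → T → ℝ}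
    (hF : ∀ β, BddAbove (Set.range (F β))) :
    ⨆ t, bernoulliMean p (fun β => F β t) ≤ bernoulliMean p (fun β => ⨆ t, F β t) :=
  ciSup_le fun t => bernoulliMean_mono hp0 hp1 fun β => le_ciSup (hF β) t

lemma abs_maskVal_sub_le (b : Bool) {r : ℝ} (hr0 : 0 ≤ r) (hr1 : r ≤ 1) : |maskVal b - r| ≤ 1 :=
  abs_le.2 ⟨by linarith [maskVal_nonneg b], by linarith [maskVal_le_one b]⟩

lemma bernoulliMean_const_sub (c : ℝ) (f : (ι → Bool) → ℝ) :
    bernoulliMean p (fun β => c - f β) = c - bernoulliMean p f := by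
  simp only [bernoulliMean, mul_sub, sum_sub_distrib, ← sum_mul, sum_bernoulliWeight, one_mul]

/-- Centering by an independent copy `β'` of the Bernoulli pattern. -/
lemma bernoulliMean_iSup_centered_le (hp0 : 0 ≤ p) (hp1 : p ≤ 1) {y : ι → T → ℝ} {C : ℝ}
    (hy : ∀ q t, |y q t| ≤ C) :
    bernoulliMean p (fun β => ⨆ t, ∑ q, (maskVal (β q) - p) * y q t) ≤
      bernoulliMean p (fun β => bernoulliMean p (fun β' =>
        ⨆ t, ∑ q, (maskVal (β q) - maskVal (β' q)) * y q t)) := by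
  refine bernoulliMean_mono hp0 hp1 fun β => ?_
  have hcopy : ∀ t, ∑ q, (maskVal (β q) - p) * y q t =
      bernoulliMean p (fun β' => ∑ q, (maskVal (β q) - maskVal (β' q)) * y q t) := fun t => by
    simp only [sub_mul, sum_sub_distrib, bernoulliMean_const_sub,
      bernoulliMean_sum_maskVal_mul, mul_sum]
  simp only [hcopy]
  exact iSup_bernoulliMean_le hp0 hp1 fun β' =>
    bddAbove_range_sum_mul hy fun q =>
      abs_maskVal_sub_le _ (maskVal_nonneg _) (maskVal_le_one _)

/-- Flipping the sign of `β q - β' q` amounts to exchanging `β q` and `β' q`. -/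
lemma bernoulliMean_iSup_sub_le_signed (hp0 : 0 ≤ p) (hp1 : p ≤ 1) {y : ι → T → ℝ} {C : ℝ}
    (hy : ∀ q t, |y q t| ≤ C) (τ : ι → Bool) :
    bernoulliMean p (fun β => bernoulliMean p (fun β' =>
        ⨆ t, ∑ q, (maskVal (β q) - maskVal (β' q)) * y q t)) ≤
      bernoulliMean p (fun β => ⨆ t, ∑ q, signVal (τ q) * (maskVal (β q) * y q t)) +
        bernoulliMean p (fun β => ⨆ t, ∑ q, signVal (!τ q) * (maskVal (β q) * y q t)) := by
  have hpoint : ∀ β β' : ι → Bool,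
      (⨆ t, ∑ q, signVal (τ q) * (maskVal (β q) - maskVal (β' q)) * y q t) ≤
        (⨆ t, ∑ q, signVal (τ q) * (maskVal (β q) * y q t)) +
          ⨆ t, ∑ q, signVal (!τ q) * (maskVal (β' q) * y q t) := fun β β' => ciSup_le fun t => by
    have hsplit : ∑ q, signVal (τ q) * (maskVal (β q) - maskVal (β' q)) * y q t =
        ∑ q, signVal (τ q) * (maskVal (β q) * y q t) +
          ∑ q, signVal (!τ q) * (maskVal (β' q) * y q t) := by
      rw [← sum_add_distrib]
      exact sum_congr rfl fun q _ => by rw [signVal_not]; ring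
    rw [hsplit]
    exact add_le_add (le_ciSup (bddAbove_range_sum_signVal_mul_maskVal_mul hy β τ) t)
      (le_ciSup (bddAbove_range_sum_signVal_mul_maskVal_mul hy β' _) t)
  calc _ = bernoulliMean p (fun β => bernoulliMean p (fun β' =>
        ⨆ t, ∑ q, signVal (τ q) * (maskVal (β q) - maskVal (β' q)) * y q t)) := by
        rw [← bernoulliMean_swap τ]
        refine congrArg (bernoulliMean p) (funext fun β => congrArg (bernoulliMean p)
          (funext fun β' => congrArg iSup (funext fun t => sum_congr rfl fun q _ => ?_)))
        by_cases hq : τ q <;> simp [hq, signVal]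
    _ ≤ _ := bernoulliMean_mono hp0 hp1 fun β => bernoulliMean_mono hp0 hp1 (hpoint β)
    _ = _ := by simp only [bernoulliMean_add, bernoulliMean_const]

lemma bernoulliMean_iSup_sub_le (hp0 : 0 ≤ p) (hp1 : p ≤ 1) {y : ι → T → ℝ} {C : ℝ}
    (hy : ∀ q t, |y q t| ≤ C) :
    bernoulliMean p (fun β => bernoulliMean p (fun β' =>
        ⨆ t, ∑ q, (maskVal (β q) - maskVal (β' q)) * y q t)) ≤
      2 * bernoulliMean p (fun β => bernoulliMean (1 / 2) (fun τ =>
        ⨆ t, ∑ q, signVal (τ q) * (maskVal (β q) * y q t))) := by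
  let S : (ι → Bool) → ℝ := fun τ =>
    bernoulliMean p (fun β => ⨆ t, ∑ q, signVal (τ q) * (maskVal (β q) * y q t))
  let neg : (ι → Bool) ≃ (ι → Bool) :=
    Function.Involutive.toPerm (fun τ q => !τ q) fun τ => by simp
  calc _ = bernoulliMean (1 / 2) (fun _ => _) := (bernoulliMean_const _ _).symm
    _ ≤ bernoulliMean (1 / 2) (fun τ => S τ + S (neg τ)) :=
        bernoulliMean_mono (by norm_num) (by norm_num)
          (bernoulliMean_iSup_sub_le_signed hp0 hp1 hy)
    _ = 2 * bernoulliMean (1 / 2) S := by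
        rw [bernoulliMean_add, two_mul, ← bernoulliMean_half_comp_equiv neg S]
        rfl
    _ = _ := by rw [bernoulliMean_comm]

end Symmetrization

section MainEstimate

lemma abs_mul_sq_sub_mul_sq_le {a m x y : ℝ} (hx : |x| ≤ a) (hy : |y| ≤ a) :
    |m * x ^ 2 - m * y ^ 2| ≤ |2 * a * (m * x) - 2 * a * (m * y)| := by
  have ha : 0 ≤ 2 * a := by linarith [abs_nonneg x]
  rw [show m * x ^ 2 - m * y ^ 2 = m * (x - y) * (x + y) by ring,
    show 2 * a * (m * x) - 2 * a * (m * y) = m * (x - y) * (2 * a) by ring,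
    abs_mul, abs_mul _ (2 * a), abs_of_nonneg ha]
  exact mul_le_mul_of_nonneg_left ((abs_add_le x y).trans (by linarith)) (abs_nonneg _)

lemma abs_sq_le_sq_of_abs_le {a x : ℝ} (hx : |x| ≤ a) : |x ^ 2| ≤ a ^ 2 := by
  rw [abs_pow]; exact pow_le_pow_left₀ (abs_nonneg x) hx 2

lemma abs_maskVal_mul_le (b : Bool) (z : ℝ) : |maskVal b * z| ≤ |z| := by
  rw [abs_mul]; exact mul_le_of_le_one_left (abs_nonneg z) (abs_maskVal_le_one b)

variable {ι : Type*} [Fintype ι] {T : Type*} [Nonempty T] {p : ℝ}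

lemma sq_iSup_sqrt_le {g : T → ℝ} (hg0 : ∀ t, 0 ≤ g t) (hg : BddAbove (Set.range g)) :
    (⨆ t, √(g t)) ^ 2 ≤ ⨆ t, g t :=
  (Real.le_sqrt (Real.iSup_nonneg fun _ => Real.sqrt_nonneg _)
      ((hg0 (Classical.arbitrary T)).trans (le_ciSup hg _))).1
    (ciSup_le fun t => Real.sqrt_le_sqrt (le_ciSup hg t))

lemma sq_iSup_sqrt_sum_maskVal_mul_le (hp0 : 0 ≤ p) (hp1 : p ≤ 1) {x : ι → T → ℝ} {a δ : ℝ}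
    (hx : ∀ q t, |x q t| ≤ a) (hδ : ∀ t, ∑ q, x q t ^ 2 ≤ δ ^ 2) (β : ι → Bool) :
    (⨆ t, √(∑ q, maskVal (β q) * x q t ^ 2)) ^ 2 ≤
      p * δ ^ 2 + ⨆ t, ∑ q, (maskVal (β q) - p) * x q t ^ 2 := by
  have hx2 : ∀ q t, |x q t ^ 2| ≤ a ^ 2 := fun q t => abs_sq_le_sq_of_abs_le (hx q t)
  refine (sq_iSup_sqrt_le (g := fun t => ∑ q, maskVal (β q) * x q t ^ 2)
    (fun t => sum_nonneg fun q _ => mul_nonneg (maskVal_nonneg _) (sq_nonneg _))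
    (bddAbove_range_sum_mul hx2 fun q => abs_maskVal_le_one (β q))).trans (ciSup_le fun t => ?_)
  have hsplit : ∑ q, maskVal (β q) * x q t ^ 2 =
      p * ∑ q, x q t ^ 2 + ∑ q, (maskVal (β q) - p) * x q t ^ 2 := by
    rw [mul_sum, ← sum_add_distrib]; exact sum_congr rfl fun q _ => by ring
  rw [hsplit]
  exact add_le_add (mul_le_mul_of_nonneg_left (hδ t) hp0)
    (le_ciSup (bddAbove_range_sum_mul hx2 fun q => abs_maskVal_sub_le _ hp0 hp1) t)

variable [DecidableEq ι]

/-- Contraction by `s ↦ s²`, which is `2a`-Lipschitz on `[-a, a]`. -/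
lemma bernoulliMean_half_iSup_sq_le {x : ι → T → ℝ} {a : ℝ} (ha : 0 ≤ a)
    (hx : ∀ q t, |x q t| ≤ a) (β : ι → Bool) :
    bernoulliMean (1 / 2) (fun τ => ⨆ t, ∑ q, signVal (τ q) * (maskVal (β q) * x q t ^ 2)) ≤
      2 * a * bernoulliMean (1 / 2) (fun τ =>
        ⨆ t, ∑ q, signVal (τ q) * (maskVal (β q) * x q t)) := by
  have h2a : 0 ≤ 2 * a := by positivity
  have hscale : ∀ τ : ι → Bool,
      (⨆ t, ∑ q, signVal (τ q) * (2 * a * (maskVal (β q) * x q t))) =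
        2 * a * ⨆ t, ∑ q, signVal (τ q) * (maskVal (β q) * x q t) := fun τ => by
    simp only [Real.mul_iSup_of_nonneg h2a, mul_sum, mul_left_comm]
  rw [bernoulliMean_half_eq, bernoulliMean_half_eq, mul_left_comm]
  refine mul_le_mul_of_nonneg_left ?_ (by positivity)
  simp only [mul_sum, ← hscale]
  exact sum_iSup_signVal_le_of_lipschitz (Cu := 2 * a * a) (Cv := a ^ 2)
    (fun q t => by
      rw [abs_mul, abs_of_nonneg h2a]
      exact mul_le_mul_of_nonneg_left ((abs_maskVal_mul_le _ _).trans (hx q t)) h2a)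
    (fun q t => (abs_maskVal_mul_le _ _).trans (abs_sq_le_sq_of_abs_le (hx q t)))
    fun q t s => abs_mul_sq_sub_mul_sq_le (hx q t) (hx q s)

theorem sq_bernoulliMean_iSup_sqrt_le (hp0 : 0 ≤ p) (hp1 : p ≤ 1) {x : ι → T → ℝ} {a δ : ℝ}
    (ha : 0 ≤ a) (hx : ∀ q t, |x q t| ≤ a) (hδ : ∀ t, ∑ q, x q t ^ 2 ≤ δ ^ 2) :
    bernoulliMean p (fun β => ⨆ t, √(∑ q, maskVal (β q) * x q t ^ 2)) ^ 2 ≤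
      p * δ ^ 2 + 4 * a * bernoulliMean p (fun β => bernoulliMean (1 / 2) (fun τ =>
        ⨆ t, ∑ q, signVal (τ q) * (maskVal (β q) * x q t))) := by
  have hx2 : ∀ q t, |x q t ^ 2| ≤ a ^ 2 := fun q t => abs_sq_le_sq_of_abs_le (hx q t)
  calc _ ≤ bernoulliMean p (fun β => (⨆ t, √(∑ q, maskVal (β q) * x q t ^ 2)) ^ 2) :=
        sq_bernoulliMean_le hp0 hp1 _
    _ ≤ bernoulliMean p (fun β => p * δ ^ 2 + ⨆ t, ∑ q, (maskVal (β q) - p) * x q t ^ 2) :=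
        bernoulliMean_mono hp0 hp1 (sq_iSup_sqrt_sum_maskVal_mul_le hp0 hp1 hx hδ)
    _ ≤ p * δ ^ 2 + 2 * bernoulliMean p (fun β => bernoulliMean (1 / 2) (fun τ =>
          ⨆ t, ∑ q, signVal (τ q) * (maskVal (β q) * x q t ^ 2))) := by
        rw [bernoulliMean_add, bernoulliMean_const]
        exact add_le_add le_rfl ((bernoulliMean_iSup_centered_le hp0 hp1 hx2).trans
          (bernoulliMean_iSup_sub_le hp0 hp1 hx2))
    _ ≤ p * δ ^ 2 + 2 * bernoulliMean p (fun β => 2 * a * bernoulliMean (1 / 2) (fun τ =>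
          ⨆ t, ∑ q, signVal (τ q) * (maskVal (β q) * x q t))) :=
        add_le_add le_rfl (mul_le_mul_of_nonneg_left
          (bernoulliMean_mono hp0 hp1 (bernoulliMean_half_iSup_sq_le ha hx)) zero_le_two)
    _ = _ := by rw [bernoulliMean_const_mul]; ring

end MainEstimate

section MatrixNorms

open Matrix

variable {m1 m2 : ℕ}

lemma frob2_nonneg (A : Matrix (Fin m1) (Fin m2) ℝ) : 0 ≤ frob2 A := by
  unfold frob2; positivity

lemma frob_zero : frob (0 : Matrix (Fin m1) (Fin m2) ℝ) = 0 := by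
  simp [frob, frob2]

lemma nucNorm_zero : nucNorm (0 : Matrix (Fin m1) (Fin m2) ℝ) = 0 :=
  sum_eq_zero fun i _ => by rw [IsHermitian.eigenvalues_eq]; simp

lemma sum_sq_mulVec_le_frob2 (M : Matrix (Fin m1) (Fin m2) ℝ) {v : Fin m2 → ℝ}
    (hv : ∑ j, v j ^ 2 ≤ 1) : ∑ i, (M *ᵥ v) i ^ 2 ≤ frob2 M :=
  sum_le_sum fun i _ => (sum_mul_sq_le_sq_mul_sq univ (M i) v).trans
    (mul_le_of_le_one_right (by positivity) hv)

lemma sqrt_sum_sq_mulVec_le_opNorm (M : Matrix (Fin m1) (Fin m2) ℝ) {v : Fin m2 → ℝ}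
    (hv : ∑ j, v j ^ 2 ≤ 1) : √(∑ i, (M *ᵥ v) i ^ 2) ≤ opNorm M :=
  le_ciSup (f := fun v : {v : Fin m2 → ℝ // ∑ j, v j ^ 2 ≤ 1} => √(∑ i, (M *ᵥ v.1) i ^ 2))
    (bddAbove_range_of_le fun v => Real.sqrt_le_sqrt (sum_sq_mulVec_le_frob2 M v.2)) ⟨v, hv⟩

lemma opNorm_nonneg (M : Matrix (Fin m1) (Fin m2) ℝ) : 0 ≤ opNorm M :=
  (Real.sqrt_nonneg _).trans (sqrt_sum_sq_mulVec_le_opNorm M (v := 0) (by simp))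

lemma mdot_eq_sum_orthonormalBasis (M A : Matrix (Fin m1) (Fin m2) ℝ)
    (b : OrthonormalBasis (Fin m2) ℝ (EuclideanSpace ℝ (Fin m2))) :
    mdot M A = ∑ l, ∑ i, (M *ᵥ (b l).ofLp) i * (A *ᵥ (b l).ofLp) i := by
  have hrow : ∀ i, ∑ j, M i j * A i j =
      ∑ l, (M *ᵥ (b l).ofLp) i * (A *ᵥ (b l).ofLp) i := fun i => by
    have := b.sum_inner_mul_inner (WithLp.toLp 2 (M i)) (WithLp.toLp 2 (A i))
    simp only [PiLp.inner_apply, Real.inner_apply] at this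
    simpa [mulVec, dotProduct, mul_comm] using this.symm
  simp only [mdot, hrow]
  exact sum_comm

lemma sum_sq_mulVec_eigenvectorBasis (A : Matrix (Fin m1) (Fin m2) ℝ)
    (hA : (Aᵀ * A).IsHermitian) (l : Fin m2) :
    ∑ i, (A *ᵥ (hA.eigenvectorBasis l).ofLp) i ^ 2 = hA.eigenvalues l := by
  rw [hA.eigenvalues_eq, ← mulVec_mulVec, dotProduct_mulVec]
  simp [vecMul_transpose, dotProduct, sq]

theorem mdot_le_opNorm_mul_nucNorm (M A : Matrix (Fin m1) (Fin m2) ℝ) :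
    mdot M A ≤ opNorm M * nucNorm A := by
  have hA : (Aᵀ * A).IsHermitian := by
    simpa [conjTranspose_eq_transpose_of_trivial] using isHermitian_conjTranspose_mul_self A
  let w := hA.eigenvectorBasis
  have hunit : ∀ l, ∑ j, (w l).ofLp j ^ 2 ≤ 1 := fun l => by
    rw [← EuclideanSpace.real_norm_sq_eq, w.norm_eq_one, one_pow]
  change _ ≤ opNorm M * ∑ l, √(hA.eigenvalues l)
  rw [mdot_eq_sum_orthonormalBasis M A w, mul_sum]
  refine sum_le_sum fun l _ => ?_
  rw [← sum_sq_mulVec_eigenvectorBasis A hA l]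
  exact (Real.sum_mul_le_sqrt_mul_sqrt _ _ _).trans (mul_le_mul_of_nonneg_right
    (sqrt_sum_sq_mulVec_le_opNorm M (hunit l)) (Real.sqrt_nonneg _))

end MatrixNorms

section Reduction

variable {Ω : Type*} [MeasurableSpace Ω] {P : Measure Ω} [IsProbabilityMeasure P]

theorem integral_eq_sum_of_iIndepFun_twoValued {κ : Type*} [Fintype κ] [DecidableEq κ]
    {X : κ → Ω → ℝ} {c : κ → Bool → ℝ} {π : κ → ℝ} (hX : ∀ k, Measurable (X k))
    (hind : iIndepFun X P) (hc : ∀ k, c k true ≠ c k false)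
    (hval : ∀ ω k, X k ω = c k true ∨ X k ω = c k false)
    (hprob : ∀ k, P.real {ω | X k ω = c k true} = π k) (F : (κ → ℝ) → ℝ) :
    ∫ ω, F (fun k => X k ω) ∂P =
      ∑ s : κ → Bool, (∏ k, if s k then π k else 1 - π k) * F (fun k => c k (s k)) := by
  let pattern : Ω → κ → Bool := fun ω k => decide (X k ω = c k true)
  have hX_eq : ∀ ω k, X k ω = c k (pattern ω k) := fun ω k => by
    rcases hval ω k with h | h <;> simp [pattern, h, (hc k).symm]
  have hinj : ∀ k, Function.Injective (c k) := fun k b b' h => by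
    cases b <;> cases b' <;> first | rfl | exact absurd h (hc k) | exact absurd h.symm (hc k)
  have hpre : ∀ s, pattern ⁻¹' {s} = ⋂ k, X k ⁻¹' {c k (s k)} := fun s => by
    ext ω
    simp only [Set.mem_preimage, Set.mem_singleton_iff, Set.mem_iInter, hX_eq ω, (hinj _).eq_iff,
      funext_iff]
  have hmeas_pre : ∀ k b, MeasurableSet (X k ⁻¹' {c k b}) :=
    fun k b => hX k (measurableSet_singleton _)
  have hpattern : Measurable pattern := measurable_to_countable' fun s => by
    rw [hpre s]; exact MeasurableSet.iInter fun k => hmeas_pre k (s k)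
  have hfactor : ∀ k b, P.real (X k ⁻¹' {c k b}) = if b then π k else 1 - π k := fun k b => by
    have htrue : X k ⁻¹' {c k true} = {ω | X k ω = c k true} := rfl
    cases b
    · have hfalse : X k ⁻¹' {c k false} = (X k ⁻¹' {c k true})ᶜ := by
        ext ω; rcases hval ω k with h | h <;> simp [h, hc k, (hc k).symm]
      rw [hfalse, probReal_compl_eq_one_sub (hmeas_pre k true), htrue, hprob]; rfl
    · rw [htrue, hprob]; rfl
  calc ∫ ω, F (fun k => X k ω) ∂P
      = ∫ s, F (fun k => c k (s k)) ∂(P.map pattern) := by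
        rw [integral_map hpattern.aemeasurable (Measurable.of_discrete).aestronglyMeasurable]
        simp only [← hX_eq]
    _ = ∑ s, P.real (pattern ⁻¹' {s}) * F (fun k => c k (s k)) := by
        rw [integral_fintype Integrable.of_finite]
        simp only [map_measureReal_apply hpattern (measurableSet_singleton _), smul_eq_mul]
    _ = _ := by
        refine sum_congr rfl fun s _ => ?_
        have hindep := hind.measure_inter_preimage_eq_mul univ
          (sets := fun k => {c k (s k)}) fun k _ => measurableSet_singleton _
        simp only [mem_univ, Set.iInter_true] at hindep
        rw [hpre s, measureReal_def, hindep, ENNReal.toReal_prod]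
        simp only [← measureReal_def, hfactor]

end Reduction

section SamplingReduction

variable {m1 m2 : ℕ}

def maskMatrix (β : Fin m1 × Fin m2 → Bool) : Matrix (Fin m1) (Fin m2) ℝ :=
  Matrix.of fun i j => maskVal (β (i, j))

def signMatrix (τ : Fin m1 × Fin m2 → Bool) : Matrix (Fin m1) (Fin m2) ℝ :=
  Matrix.of fun i j => signVal (τ (i, j))

theorem integral_eq_bernoulliMean {Ω : Type} [MeasurableSpace Ω] {P : Measure Ω}
    [IsProbabilityMeasure P] {B eR : Ω → Matrix (Fin m1) (Fin m2) ℝ} {p : ℝ}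
    (hB : IsBernoulliMatrix P B p) (heR : IsRademacherMatrix P eR) (hBeR : JointlyIndep P B eR)
    (hp0 : 0 ≤ p) (G : Matrix (Fin m1) (Fin m2) ℝ → Matrix (Fin m1) (Fin m2) ℝ → ℝ) :
    ∫ ω, G (B ω) (eR ω) ∂P =
      bernoulliMean p (fun β => bernoulliMean (1 / 2) (fun τ =>
        G (maskMatrix β) (signMatrix τ))) := by
  let ι := Fin m1 × Fin m2
  have key := integral_eq_sum_of_iIndepFun_twoValued (P := P) (κ := ι ⊕ ι)
    (c := Sum.elim (fun _ => maskVal) (fun _ => signVal))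
    (π := Sum.elim (fun _ => p) (fun _ => 1 / 2))
    (fun k => k.rec (fun q => hB.1 q.1 q.2) (fun q => heR.1 q.1 q.2)) hBeR
    (fun k => k.rec (fun _ => by norm_num [maskVal]) (fun _ => by norm_num [signVal]))
    (fun ω k => k.rec (fun q => by simpa [maskVal] using (hB.2.1 ω q.1 q.2).symm)
      (fun q => by simpa [signVal] using heR.2.1 ω q.1 q.2))
    (fun k => k.rec (fun q => by simp [maskVal, measureReal_def, hB.2.2.1, hp0])
      (fun q => by simp [signVal, measureReal_def, heR.2.2]))
    (fun y => G (Matrix.of fun i j => y (Sum.inl (i, j))) (Matrix.of fun i j => y (Sum.inr (i, j))))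
  refine key.trans ?_
  rw [← (Equiv.sumArrowEquivProdArrow ι ι Bool).symm.sum_comp, Fintype.sum_prod_type]
  simp only [bernoulliMean, mul_sum]
  refine sum_congr rfl fun β _ => sum_congr rfl fun τ _ => ?_
  rw [Fintype.prod_sum_type, ← mul_assoc]
  rfl

end SamplingReduction

section SampledMatrices

variable {m1 m2 : ℕ}

lemma sq_maskVal (b : Bool) : maskVal b ^ 2 = maskVal b := by cases b <;> norm_num [maskVal]

lemma frob_hadB_maskMatrix (β : Fin m1 × Fin m2 → Bool) (A : Matrix (Fin m1) (Fin m2) ℝ) :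
    frob (hadB (maskMatrix β) A) = √(∑ q, maskVal (β q) * A q.1 q.2 ^ 2) := by
  simp only [frob, frob2, hadB, maskMatrix, Matrix.of_apply, mul_pow, sq_maskVal,
    Fintype.sum_prod_type]

lemma mdot_maskMatrix_signMatrix (β τ : Fin m1 × Fin m2 → Bool) (A : Matrix (Fin m1) (Fin m2) ℝ) :
    mdot (Matrix.of fun i j => maskMatrix β i j * signMatrix τ i j) A =
      ∑ q, signVal (τ q) * (maskVal (β q) * A q.1 q.2) := by
  simp only [mdot, maskMatrix, signMatrix, Matrix.of_apply, Fintype.sum_prod_type]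
  exact sum_congr rfl fun i _ => sum_congr rfl fun j _ => by ring

lemma sum_sq_le_of_frob_le {A : Matrix (Fin m1) (Fin m2) ℝ} {δ : ℝ} (h : frob A ≤ δ) :
    ∑ q : Fin m1 × Fin m2, A q.1 q.2 ^ 2 ≤ δ ^ 2 := by
  rw [Fintype.sum_prod_type]
  calc frob2 A = frob A ^ 2 := (Real.sq_sqrt (frob2_nonneg A)).symm
    _ ≤ δ ^ 2 := pow_le_pow_left₀ (Real.sqrt_nonneg _) h 2

lemma zero_mem_classD {k : ℕ} {a δ T : ℝ} (ha : 0 ≤ a) (hδ : 0 ≤ δ) (hT : 0 ≤ T) :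
    (0 : Matrix (Fin m1) (Fin m2) ℝ) ∈ classD k a δ T :=
  ⟨fun i j => by simpa using ha, by rwa [frob_zero], by rw [nucNorm_zero]; positivity⟩

lemma sum_signVal_mul_maskVal_mul_le_opNorm_mul {k : ℕ} {a δ T : ℝ} (β τ : Fin m1 × Fin m2 → Bool)
    {A : Matrix (Fin m1) (Fin m2) ℝ} (hA : A ∈ classD k a δ T) :
    ∑ q, signVal (τ q) * (maskVal (β q) * A q.1 q.2) ≤
      opNorm (Matrix.of fun i j => maskMatrix β i j * signMatrix τ i j) * (√k * T) := by
  rw [← mdot_maskMatrix_signMatrix]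
  exact (mdot_le_opNorm_mul_nucNorm _ _).trans
    (mul_le_mul_of_nonneg_left hA.2.2 (opNorm_nonneg _))

end SampledMatrices

theorem symmetrization_contraction_bound_general (m1 m2 n k : ℕ) (a p T δ : ℝ)
    (Ω : Type) [MeasurableSpace Ω] (P : Measure Ω) [IsProbabilityMeasure P]
    (B eR : Ω → Matrix (Fin m1) (Fin m2) ℝ)
    (hnle : n ≤ m1 * m2)
    (hp : p = (n : ℝ) / (m1 * m2)) (ha : 0 < a) (hT : 0 < T) (hδ : 0 < δ)
    (hB : IsBernoulliMatrix P B p) (heR : IsRademacherMatrix P eR)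
    (hBeR : JointlyIndep P B eR) :
    (∫ ω, (⨆ Δ : classD (2 * k) (2 * a) δ (2 * T) (m1 := m1) (m2 := m2),
        frob (hadB (B ω) Δ.1)) ∂P) ^ 2 ≤
      16 * a * Real.sqrt (2 * k) * T *
          (∫ ω, opNorm (Matrix.of fun i j => B ω i j * eR ω i j) ∂P) +
        p * δ ^ 2 := by
  have hp0 : 0 ≤ p := by rw [hp]; positivity
  have hp1 : p ≤ 1 := by rw [hp]; exact div_le_one_of_le₀ (by exact_mod_cast hnle) (by positivity)
  let D := (classD (2 * k) (2 * a) δ (2 * T) : Set (Matrix (Fin m1) (Fin m2) ℝ))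
  have : Nonempty D := ⟨⟨0, zero_mem_classD (by positivity) hδ.le (by positivity)⟩⟩
  have hsym := sq_bernoulliMean_iSup_sqrt_le hp0 hp1
    (x := fun (q : Fin m1 × Fin m2) (Δ : D) => Δ.1 q.1 q.2) (by positivity)
    (fun (q : Fin m1 × Fin m2) Δ => Δ.2.1 q.1 q.2) (fun Δ => sum_sq_le_of_frob_le Δ.2.2.1)
  calc _ = bernoulliMean p (fun β : Fin m1 × Fin m2 → Bool =>
          ⨆ Δ : D, √(∑ q, maskVal (β q) * Δ.1 q.1 q.2 ^ 2)) ^ 2 := by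
        rw [integral_eq_bernoulliMean hB heR hBeR hp0 (fun b _ => ⨆ Δ : D, frob (hadB b Δ.1))]
        simp only [bernoulliMean_const, frob_hadB_maskMatrix]
    _ ≤ p * δ ^ 2 + 4 * (2 * a) * bernoulliMean p (fun β => bernoulliMean (1 / 2) (fun τ =>
          opNorm (Matrix.of fun i j => maskMatrix β i j * signMatrix τ i j) *
            (√↑(2 * k) * (2 * T)))) :=
        hsym.trans (add_le_add le_rfl (mul_le_mul_of_nonneg_left
          (bernoulliMean_mono hp0 hp1 fun β => bernoulliMean_mono (by norm_num) (by norm_num)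
            fun τ => ciSup_le fun Δ => sum_signVal_mul_maskVal_mul_le_opNorm_mul β τ Δ.2)
          (by positivity)))
    _ = _ := by
        rw [integral_eq_bernoulliMean hB heR hBeR hp0
          (fun b e => opNorm (Matrix.of fun i j => b i j * e i j))]
        simp only [mul_comm _ (√↑(2 * k) * (2 * T)), bernoulliMean_const_mul]
        push_cast
        ring

/-- Symmetrization/contraction bound for the expected supremum: with
X_T = sup_{Δ ∈ 𝒟_δ(2k,2a,2T)} ‖𝒳(Δ)‖₂ one has (E X_T)² ≤ 16a√(2k)·T·E‖Σ_R‖ + pδ²,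
where Σ_R = (B_ij ε'_ij)_ij for an i.i.d. Rademacher sequence ε' independent of B. -/
theorem symmetrization_contraction_bound (m1 m2 n k : ℕ) (a p T δ : ℝ)
    (Ω : Type) [MeasurableSpace Ω] (P : Measure Ω) [IsProbabilityMeasure P]
    (B eR : Ω → Matrix (Fin m1) (Fin m2) ℝ)
    (hm1 : 0 < m1) (hm2 : 0 < m2) (hn : 0 < n) (hnle : n ≤ m1 * m2)
    (hp : p = (n : ℝ) / (m1 * m2)) (ha : 0 < a) (hT : 0 < T) (hδ : 0 < δ) (hk : 1 ≤ k)
    (hB : IsBernoulliMatrix P B p) (heR : IsRademacherMatrix P eR)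
    (hBeR : JointlyIndep P B eR) :
    (∫ ω, (⨆ Δ : classD (2 * k) (2 * a) δ (2 * T) (m1 := m1) (m2 := m2),
        frob (hadB (B ω) Δ.1)) ∂P) ^ 2 ≤
      16 * a * Real.sqrt (2 * k) * T *
          (∫ ω, opNorm (Matrix.of fun i j => B ω i j * eR ω i j) ∂P) +
        p * δ ^ 2 :=
  symmetrization_contraction_bound_general m1 m2 n k a p T δ Ω P B eR hnle hp ha hT hδ hB heR hBeR
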